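/- Let $X_j \sim \mathrm{Poisson}(\lambda_j)$, $1 \le j \le n$, be independent with $\lambda_j > 0$, $S_n = \sum_{j=1}^n X_j$ and $W_n = \sum_{j=1}^n j X_j$. Then the complete exponential Bell polynomial satisfies $B_n(1!\lambda_1, 2!\lambda_2, \dots, n!\lambda_n) = \frac{n! \, P(W_n = n)}{P(S_n = 0)}$ for $n \ge 1$. -/

import Mathlib

/-!
By independence, `P(X = c) = ∏ⱼ e^{-λⱼ} λⱼ^{cⱼ} / cⱼ!` for every `c ∈ ℕⁿ`, so
`P(W_n = n) = P(S_n = 0) · ∑_{∑ j cⱼ = n} ∏ⱼ λⱼ^{cⱼ} / cⱼ!` with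
`P(S_n = 0) = ∏ⱼ e^{-λⱼ}`.
After the substitution `uⱼ = j! λⱼ` the factorials `j!` cancel in the Bell polynomial, whose
sum over the same index set is then `n!` times the sum above.
-/

open MeasureTheory ProbabilityTheory Real

/-- The `n`-th complete exponential Bell polynomial. -/
noncomputable def bellComplete (n : ℕ) (u : ℕ → ℝ) : ℝ :=
  ∑ c ∈ (Fintype.piFinset fun _ : Fin n => Finset.range (n + 1)).filter
      (fun c => ∑ i, (i.1 + 1) * c i = n),
    ((n.factorial : ℝ) / ∏ i, ((c i).factorial : ℝ)) *
      ∏ i, (u (i.1 + 1) / ((i.1 + 1).factorial : ℝ)) ^ c i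

open Finset

section Independence

variable {Ω ι α : Type*} [MeasurableSpace Ω] [MeasurableSpace α] [MeasurableSingletonClass α]
  {μ : Measure Ω} [Fintype ι] {X : ι → Ω → α}

theorem MeasureTheory.measure_setOf_mem_finset_eq_sum (hX : ∀ j, Measurable (X j))
    (F : Finset (ι → α)) :
    μ {ω | (fun j => X j ω) ∈ F} = ∑ c ∈ F, μ {ω | ∀ j, X j ω = c j} := by
  have hvec : Measurable fun ω j => X j ω := measurable_pi_lambda _ hX
  calc μ {ω | (fun j => X j ω) ∈ F} = μ ((fun ω j => X j ω) ⁻¹' F) := rfl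
    _ = ∑ c ∈ F, μ ((fun ω j => X j ω) ⁻¹' {c}) :=
      (sum_measure_preimage_singleton F fun c _ => hvec (measurableSet_singleton c)).symm
    _ = ∑ c ∈ F, μ {ω | ∀ j, X j ω = c j} := by
      simp only [Set.preimage, Set.mem_singleton_iff, funext_iff]

theorem ProbabilityTheory.iIndepFun.measure_forall_eq (hX : iIndepFun X μ) (c : ι → α) :
    μ {ω | ∀ j, X j ω = c j} = ∏ j, μ {ω | X j ω = c j} := by
  have h := hX.meas_iInter (s := fun j => X j ⁻¹' {c j}) fun j =>
    ⟨{c j}, measurableSet_singleton _, rfl⟩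
  simpa only [Set.preimage, Set.mem_singleton_iff, Set.iInter_ofPred] using h

theorem ProbabilityTheory.iIndepFun.measure_forall_eq_toReal (hX : iIndepFun X μ)
    {p : ι → α → ℝ} (hp : ∀ j a, 0 ≤ p j a)
    (hdist : ∀ j a, μ {ω | X j ω = a} = ENNReal.ofReal (p j a)) (c : ι → α) :
    (μ {ω | ∀ j, X j ω = c j}).toReal = ∏ j, p j (c j) := by
  simp only [hX.measure_forall_eq, ENNReal.toReal_prod, hdist, ENNReal.toReal_ofReal (hp _ _)]

end Independence

/-- `c i` is the number of parts equal to `i + 1`. -/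
def partitionMultiplicities (n : ℕ) : Finset (Fin n → ℕ) :=
  (Fintype.piFinset fun _ : Fin n => range (n + 1)).filter (fun c => ∑ i, (i.1 + 1) * c i = n)

theorem mem_partitionMultiplicities {n : ℕ} {c : Fin n → ℕ} :
    c ∈ partitionMultiplicities n ↔ ∑ i, (i.1 + 1) * c i = n := by
  simp only [partitionMultiplicities, mem_filter, Fintype.mem_piFinset, mem_range,
    and_iff_right_iff_imp]
  intro hc i
  have : (i.1 + 1) * c i ≤ n :=
    (single_le_sum (f := fun i : Fin n => (i.1 + 1) * c i) (by simp) (mem_univ i)).trans_eq hc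
  nlinarith

theorem bellComplete_factorial_mul (n : ℕ) (l : ℕ → ℝ) :
    bellComplete n (fun j => (j.factorial : ℝ) * l j) =
      ∑ c ∈ partitionMultiplicities n,
        (n.factorial : ℝ) * ∏ i, l (i.1 + 1) ^ c i / ((c i).factorial : ℝ) := by
  refine sum_congr rfl fun c _ => ?_
  have hfac (k : ℕ) : (k.factorial : ℝ) ≠ 0 := by positivity
  simp only [mul_div_cancel_left₀ _ (hfac _), prod_div_distrib]
  ring

theorem prod_poisson_pmf_eq {ι : Type*} [Fintype ι] (l : ι → ℝ) (c : ι → ℕ) :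
    ∏ j, rexp (-l j) * l j ^ c j / ((c j).factorial : ℝ) =
      (∏ j, rexp (-l j)) * ∏ j, l j ^ c j / ((c j).factorial : ℝ) := by
  simp only [mul_div_assoc, prod_mul_distrib]

theorem bellComplete_eq_poisson_prob_general
    {Ω : Type*} [MeasurableSpace Ω] (μ : Measure Ω) [IsProbabilityMeasure μ]
    (n : ℕ) (l : ℕ → ℝ) (hl : ∀ j, 0 < l j)
    (X : Fin n → Ω → ℕ) (hXmeas : ∀ j, Measurable (X j))
    (hindep : iIndepFun X μ)
    (hXdist : ∀ j m, μ {ω | X j ω = m} =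
      ENNReal.ofReal (Real.exp (-(l (j.1 + 1))) * (l (j.1 + 1)) ^ m / m.factorial)) :
    bellComplete n (fun j => (j.factorial : ℝ) * l j) =
      (n.factorial : ℝ) *
        (μ {ω | (∑ j : Fin n, (j.1 + 1) * X j ω) = n}).toReal /
        (μ {ω | (∑ j : Fin n, X j ω) = 0}).toReal := by
  have hW : {ω | ∑ j : Fin n, (j.1 + 1) * X j ω = n} =
      {ω | (fun j => X j ω) ∈ partitionMultiplicities n} := by
    simp only [mem_partitionMultiplicities]
  have hS : {ω | ∑ j : Fin n, X j ω = 0} = {ω | ∀ j, X j ω = 0} := by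
    ext ω
    simp [sum_eq_zero_iff]
  have hatom := hindep.measure_forall_eq_toReal
    (fun j m => div_nonneg (mul_nonneg (exp_pos _).le (pow_nonneg (hl _).le m)) (by positivity))
    hXdist
  rw [hW, hS, measure_setOf_mem_finset_eq_sum hXmeas,
    ENNReal.toReal_sum fun c _ => measure_ne_top μ _, bellComplete_factorial_mul]
  simp only [hatom, prod_poisson_pmf_eq fun j : Fin n => l (j.1 + 1), pow_zero,
    Nat.factorial_zero, Nat.cast_one, div_one, mul_one, ← mul_sum]
  field_simp

/-- probabilistic formula for the complete exponential Bell
polynomial: `B_n(1!λ_1,…,n!λ_n) = n! P(W_n = n) / P(S_n = 0)` for `n ≥ 1`,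
with independent `X_j ~ Poisson(λ_j)`, `λ_j > 0`, `S_n = ∑ X_j`,
`W_n = ∑ j X_j`. -/
theorem bellComplete_eq_poisson_prob
    {Ω : Type*} [MeasurableSpace Ω] (μ : Measure Ω) [IsProbabilityMeasure μ]
    (n : ℕ) (hn : 1 ≤ n) (l : ℕ → ℝ) (hl : ∀ j, 0 < l j)
    (X : Fin n → Ω → ℕ) (hXmeas : ∀ j, Measurable (X j))
    (hindep : iIndepFun X μ)
    (hXdist : ∀ j m, μ {ω | X j ω = m} =
      ENNReal.ofReal (Real.exp (-(l (j.1 + 1))) * (l (j.1 + 1)) ^ m / m.factorial)) :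
    bellComplete n (fun j => (j.factorial : ℝ) * l j) =
      (n.factorial : ℝ) *
        (μ {ω | (∑ j : Fin n, (j.1 + 1) * X j ω) = n}).toReal /
        (μ {ω | (∑ j : Fin n, X j ω) = 0}).toReal :=
  bellComplete_eq_poisson_prob_general μ n l hl X hXmeas hindep hXdist
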